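/- arXiv:math/0612142 — 2 statements merged into one kernel-verified Lean document; each statement's English description precedes it below -/
import Mathlib

section
/- Let φ₁,…,φ_d : ℝ^d → ℝ ∪ {+∞} be proper l.s.c. convex functions satisfying ∑ⱼ φⱼ(xⱼ) ≥ det(x₁,…,x_d) for all (x₁,…,x_d), and let x = (x₁,…,x_d). Then ∑ⱼ φⱼ(xⱼ) = det(x₁,…,x_d) holds if and only if for every i, ∑_{j≠i} φⱼ(xⱼ) = φᵢ*((-1)^{i+1} ⋀_{j≠i} xⱼ) and (-1)^{i+1} ⋀_{j≠i} xⱼ ∈ ∂φᵢ(xᵢ). -/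
open scoped RealInnerProductSpace

noncomputable def detCols (d : ℕ) (x : Fin d → EuclideanSpace ℝ (Fin d)) : ℝ :=
  Matrix.det (Matrix.of fun i j => x j i)

/-- The vector `(-1)^{i+1} ⋀_{j≠i} xⱼ`, characterized (by multilinearity of the
determinant) through `det(x₁,…,w,…,x_d) = ⟨w, signedCross d x i⟩` where `w` is put in
column `i`. -/
noncomputable def signedCross (d : ℕ) (x : Fin d → EuclideanSpace ℝ (Fin d)) (i : Fin d) :
    EuclideanSpace ℝ (Fin d) :=
  (WithLp.equiv 2 (Fin d → ℝ)).symm fun k =>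
    detCols d (Function.update x i (EuclideanSpace.single k (1 : ℝ)))

/-- Legendre–Fenchel conjugate of an `ℝ ∪ {+∞}`-valued function. -/
noncomputable def legendre (d : ℕ) (φ : EuclideanSpace ℝ (Fin d) → EReal)
    (y : EuclideanSpace ℝ (Fin d)) : EReal :=
  ⨆ x : EuclideanSpace ℝ (Fin d), ((⟪x, y⟫ : ℝ) : EReal) - φ x

/-- `v ∈ ∂φ(x)` for an extended-real-valued convex function. -/
def InSubdiff (d : ℕ) (φ : EuclideanSpace ℝ (Fin d) → EReal)
    (x v : EuclideanSpace ℝ (Fin d)) : Prop :=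
  ∀ y, φ x + ((⟪y - x, v⟫ : ℝ) : EReal) ≤ φ y

/-! Putting `y` in column `i`, the constraint says `⟪y, vᵢ⟫ ≤ φᵢ y + Sᵢ` for all `y`, where
`vᵢ = signedCross d x i` and `Sᵢ = ∑_{j ≠ i} φⱼ xⱼ`; that is, `φᵢ* vᵢ ≤ Sᵢ`. Since
`det x = ⟪xᵢ, vᵢ⟫`, equality `∑ φⱼ xⱼ = det x` forces `Sᵢ = φᵢ* vᵢ` together with the
Fenchel–Young equality `φᵢ xᵢ + φᵢ* vᵢ = ⟪xᵢ, vᵢ⟫`, which gives `vᵢ ∈ ∂φᵢ xᵢ`. Conversely,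
`vᵢ ∈ ∂φᵢ xᵢ` gives `φᵢ xᵢ + φᵢ* vᵢ ≤ ⟪xᵢ, vᵢ⟫`, so for any single `i` the sum is at most `det x`. -/

open Function

lemma Fintype.sum_apply_update_eq_add_sum_erase {ι M : Type*} [Fintype ι] [DecidableEq ι]
    [AddCommMonoid M] {β : ι → Type*} (f : ∀ j, β j → M) (x : ∀ j, β j) (i : ι) (y : β i) :
    ∑ j, f j (update x i y j) = f i y + ∑ j ∈ Finset.univ.erase i, f j (x j) := by
  rw [← Finset.add_sum_erase _ _ (Finset.mem_univ i), update_self]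
  congr 1
  exact Finset.sum_congr rfl fun j hj => by rw [update_of_ne (Finset.ne_of_mem_erase hj)]

lemma EReal.coe_sub_add_coe (p c : ℝ) (e : EReal) :
    (p : EReal) - (e + c) = ((p - c : ℝ) : EReal) - e := by
  induction e using EReal.rec <;> simp [← EReal.coe_add, ← EReal.coe_sub]; ring

lemma EReal.ne_top_and_ne_bot_of_add_eq_coe {a b : EReal} {c : ℝ} (h : a + b = c) :
    b ≠ ⊤ ∧ b ≠ ⊥ := by
  induction a using EReal.rec <;> induction b using EReal.rec <;> simp_all [← EReal.coe_add]

lemma detCols_update_eq_inner_signedCross (d : ℕ) (x : Fin d → EuclideanSpace ℝ (Fin d))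
    (i : Fin d) (w : EuclideanSpace ℝ (Fin d)) :
    detCols d (update x i w) = ⟪w, signedCross d x i⟫ := by
  let D : EuclideanSpace ℝ (Fin d) [⋀^Fin d]→ₗ[ℝ] ℝ :=
    Matrix.detRowAlternating.compLinearMap (WithLp.linearEquiv 2 ℝ (Fin d → ℝ)).toLinearMap
  have hD : ∀ y, D y = detCols d y := fun y => by
    rw [detCols, ← Matrix.det_transpose]; rfl
  conv_lhs => rw [← hD, ← (EuclideanSpace.basisFun (Fin d) ℝ).sum_repr w, D.map_update_sum]
  simp [D.map_update_smul, hD, signedCross, PiLp.inner_apply, mul_comm]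

lemma detCols_eq_inner_signedCross (d : ℕ) (x : Fin d → EuclideanSpace ℝ (Fin d)) (i : Fin d) :
    detCols d x = ⟪x i, signedCross d x i⟫ := by
  simpa using detCols_update_eq_inner_signedCross d x i (x i)

section Conjugate

variable {d : ℕ} {φ : EuclideanSpace ℝ (Fin d) → EReal} {x v : EuclideanSpace ℝ (Fin d)}

lemma InSubdiff.add_legendre_le (h : InSubdiff d φ x v) :
    φ x + legendre d φ v ≤ (⟪x, v⟫ : ℝ) := by
  refine add_comm (φ x) _ ▸ EReal.add_le_of_le_sub (iSup_le fun y => ?_)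
  calc ((⟪y, v⟫ : ℝ) : EReal) - φ y ≤ (⟪y, v⟫ : ℝ) - (φ x + (⟪y - x, v⟫ : ℝ)) :=
        EReal.sub_le_sub le_rfl (h y)
    _ = (⟪x, v⟫ : ℝ) - φ x := by rw [EReal.coe_sub_add_coe, inner_sub_left, sub_sub_cancel]

lemma legendre_eq_and_inSubdiff_of_add_eq_inner {s : EReal}
    (hle : ∀ y, ((⟪y, v⟫ : ℝ) : EReal) ≤ φ y + s) (heq : φ x + s = (⟪x, v⟫ : ℝ)) :
    s = legendre d φ v ∧ InSubdiff d φ x v := by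
  lift s to ℝ using EReal.ne_top_and_ne_bot_of_add_eq_coe heq
  have hx : φ x = ((⟪x, v⟫ - s : ℝ) : EReal) := by
    rw [EReal.coe_sub, ← heq, EReal.add_sub_cancel_right]
  refine ⟨le_antisymm ?_ (iSup_le fun y => EReal.sub_le_of_le_add' (hle y)), fun y => ?_⟩
  · exact le_iSup_of_le x (by rw [hx, ← EReal.coe_sub, sub_sub_cancel])
  · rw [hx, ← EReal.coe_add, inner_sub_left, sub_add_sub_cancel', EReal.coe_sub]
    exact EReal.sub_le_of_le_add (hle y)

end Conjugate

theorem extremality_characterization_general (d : ℕ)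
    (φ : Fin d → EuclideanSpace ℝ (Fin d) → EReal)
    (hcon : ∀ y : Fin d → EuclideanSpace ℝ (Fin d),
      ((detCols d y : ℝ) : EReal) ≤ ∑ j, φ j (y j))
    (x : Fin d → EuclideanSpace ℝ (Fin d)) :
    (∑ j, φ j (x j) = ((detCols d x : ℝ) : EReal)) ↔
      (∀ i : Fin d,
        (∑ j ∈ Finset.univ.erase i, φ j (x j) = legendre d (φ i) (signedCross d x i)) ∧
        InSubdiff d (φ i) (x i) (signedCross d x i)) := by
  have hcon_update : ∀ i y, ((⟪y, signedCross d x i⟫ : ℝ) : EReal)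
      ≤ φ i y + ∑ j ∈ Finset.univ.erase i, φ j (x j) := fun i y => by
    simpa [Fintype.sum_apply_update_eq_add_sum_erase φ, detCols_update_eq_inner_signedCross]
      using hcon (update x i y)
  constructor
  · intro hS i
    refine legendre_eq_and_inSubdiff_of_add_eq_inner (hcon_update i) ?_
    rw [Finset.add_sum_erase _ (fun j => φ j (x j)) (Finset.mem_univ i), hS,
      detCols_eq_inner_signedCross d x i]
  · intro H
    obtain ⟨i⟩ : Nonempty (Fin d) := by
      -- for `d = 0` the constraint reads `1 ≤ 0`
      by_contra hempty
      rw [not_nonempty_iff] at hempty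
      exact absurd (hcon x) (by simp [detCols])
    refine le_antisymm ?_ (hcon x)
    rw [← Finset.add_sum_erase _ _ (Finset.mem_univ i), (H i).1, detCols_eq_inner_signedCross d x i]
    exact (H i).2.add_legendre_le

theorem extremality_characterization (d : ℕ)
    (φ : Fin d → EuclideanSpace ℝ (Fin d) → EReal)
    (hlsc : ∀ i, LowerSemicontinuous (φ i))
    (hproper_bot : ∀ i x, φ i x ≠ ⊥)
    (hproper_top : ∀ i, ∃ x, φ i x ≠ ⊤)
    (hconv : ∀ i, ∀ a b : EuclideanSpace ℝ (Fin d), ∀ t : ℝ, 0 ≤ t → t ≤ 1 →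
      φ i (t • a + (1 - t) • b) ≤ ((t : ℝ) : EReal) * φ i a + (((1 - t : ℝ)) : EReal) * φ i b)
    (hcon : ∀ y : Fin d → EuclideanSpace ℝ (Fin d),
      ((detCols d y : ℝ) : EReal) ≤ ∑ j, φ j (y j))
    (x : Fin d → EuclideanSpace ℝ (Fin d)) :
    (∑ j, φ j (x j) = ((detCols d x : ℝ) : EReal)) ↔
      (∀ i : Fin d,
        (∑ j ∈ Finset.univ.erase i, φ j (x j) = legendre d (φ i) (signedCross d x i)) ∧
        InSubdiff d (φ i) (x i) (signedCross d x i)) :=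
  extremality_characterization_general d φ hcon x
end

section
/- Symmetrization of dual potentials: suppose μ₁ and μ₂ are symmetric probability measures on ℝ^d (invariant under x ↦ −x), and (φ₁,…,φ_d) are integrable functions with ∑ᵢ φᵢ(xᵢ) ≥ det(x₁,…,x_d) for all (x₁,…,x_d). Let ψ₁, ψ₂ be the even parts of φ₁, φ₂ and ψᵢ = φᵢ for i ≥ 3. Then ∑ᵢ ψᵢ(xᵢ) ≥ |det(x₁,…,x_d)| for all (x₁,…,x_d), and ∑ᵢ ∫ ψᵢ dμᵢ = ∑ᵢ ∫ φᵢ dμᵢ. -/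
open MeasureTheory

lemma detCols_update_neg (d : ℕ) (x : Fin d → EuclideanSpace ℝ (Fin d)) (j : Fin d) :
    detCols d (Function.update x j (-(x j))) = - detCols d x := by
  unfold detCols
  have h : (Matrix.of fun i j' => (Function.update x j (-(x j))) j' i)
      = (Matrix.of fun i j' => x j' i).updateCol j ((-1 : ℝ) • fun i => x j i) := by
    ext i j'
    by_cases h : j' = j <;>
      simp [Matrix.updateCol_apply, Function.update_apply, h]
  rw [h, Matrix.det_updateCol_smul]
  have h2 : ((Matrix.of fun i j' => x j' i).updateCol j fun i => x j i)
      = (Matrix.of fun i j' => x j' i) := by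
    have := Matrix.updateCol_eq_self (Matrix.of fun i j' => x j' i) j
    simpa using this
  rw [h2]; ring

theorem symmetrization_of_potentials (d : ℕ) (hd : 2 ≤ d)
    (μ : Fin d → Measure (EuclideanSpace ℝ (Fin d)))
    (hμ : ∀ i, IsProbabilityMeasure (μ i))
    (hsym₀ : (μ ⟨0, by omega⟩).map (fun x => -x) = μ ⟨0, by omega⟩)
    (hsym₁ : (μ ⟨1, by omega⟩).map (fun x => -x) = μ ⟨1, by omega⟩)
    (φ : Fin d → EuclideanSpace ℝ (Fin d) → ℝ)
    (hφ : ∀ i, Integrable (φ i) (μ i))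
    (hcon : ∀ x : Fin d → EuclideanSpace ℝ (Fin d), detCols d x ≤ ∑ i, φ i (x i))
    (ψ : Fin d → EuclideanSpace ℝ (Fin d) → ℝ)
    (hψ₀ : ∀ y, ψ ⟨0, by omega⟩ y = (φ ⟨0, by omega⟩ y + φ ⟨0, by omega⟩ (-y)) / 2)
    (hψ₁ : ∀ y, ψ ⟨1, by omega⟩ y = (φ ⟨1, by omega⟩ y + φ ⟨1, by omega⟩ (-y)) / 2)
    (hψ : ∀ i : Fin d, i ≠ ⟨0, by omega⟩ → i ≠ ⟨1, by omega⟩ → ψ i = φ i) :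
    (∀ x : Fin d → EuclideanSpace ℝ (Fin d), |detCols d x| ≤ ∑ i, ψ i (x i)) ∧
      ∑ i, ∫ y, ψ i y ∂(μ i) = ∑ i, ∫ y, φ i y ∂(μ i) := by
  set i0 : Fin d := ⟨0, by omega⟩
  set i1 : Fin d := ⟨1, by omega⟩
  have h01 : i0 ≠ i1 := by simp [i0, i1, Fin.ext_iff]
  constructor
  · intro x
    -- flip both
    set xb := Function.update (Function.update x i0 (-(x i0))) i1 (-(x i1)) with hxb
    set x0 := Function.update x i0 (-(x i0)) with hx0
    set x1 := Function.update x i1 (-(x i1)) with hx1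
    have hxb0 : xb i0 = -(x i0) := by
      simp [xb, Function.update_apply, h01]
    have hxb1 : xb i1 = -(x i1) := by simp [xb]
    have hxbi : ∀ i, i ≠ i0 → i ≠ i1 → xb i = x i := by
      intro i h0 h1; simp [xb, Function.update_apply, h0, h1]
    have key : ∀ i, 2 * ψ i (x i) = φ i (x i) + φ i (xb i) := by
      intro i
      by_cases h0 : i = i0
      · subst h0; rw [hψ₀, hxb0]; ring
      by_cases h1 : i = i1
      · subst h1; rw [hψ₁, hxb1]; ring
      · rw [hψ i h0 h1, hxbi i h0 h1]; ring
    have key2 : ∀ i, 2 * ψ i (x i) = φ i (x0 i) + φ i (x1 i) := by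
      intro i
      by_cases h0 : i = i0
      · subst h0
        have : x0 i0 = -(x i0) := by simp [x0]
        have h1' : x1 i0 = x i0 := by simp [x1, Function.update_apply, h01]
        rw [hψ₀, this, h1']; ring
      by_cases h1 : i = i1
      · subst h1
        have : x1 i1 = -(x i1) := by simp [x1]
        have h0' : x0 i1 = x i1 := by simp [x0, Function.update_apply, h01.symm]
        rw [hψ₁, this, h0']; ring
      · have e0 : x0 i = x i := by simp [x0, Function.update_apply, h0]
        have e1 : x1 i = x i := by simp [x1, Function.update_apply, h1]
        rw [hψ i h0 h1, e0, e1]; ring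
    have hsum : 2 * ∑ i, ψ i (x i) = (∑ i, φ i (x i)) + ∑ i, φ i (xb i) := by
      rw [Finset.mul_sum, ← Finset.sum_add_distrib]
      exact Finset.sum_congr rfl fun i _ => key i
    have hsum2 : 2 * ∑ i, ψ i (x i) = (∑ i, φ i (x0 i)) + ∑ i, φ i (x1 i) := by
      rw [Finset.mul_sum, ← Finset.sum_add_distrib]
      exact Finset.sum_congr rfl fun i _ => key2 i
    have hdetb : detCols d xb = detCols d x := by
      rw [hxb]
      have h1 : (Function.update x i0 (-(x i0))) i1 = x i1 := by
        simp [Function.update_apply, h01.symm]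
      calc detCols d (Function.update (Function.update x i0 (-(x i0))) i1
              (-(x i1)))
          = detCols d (Function.update (Function.update x i0 (-(x i0))) i1
              (-((Function.update x i0 (-(x i0))) i1))) := by rw [h1]
        _ = - detCols d (Function.update x i0 (-(x i0))) :=
            detCols_update_neg d _ i1
        _ = detCols d x := by rw [detCols_update_neg]; ring
    have hdet0 : detCols d x0 = - detCols d x := detCols_update_neg d x i0
    have hdet1 : detCols d x1 = - detCols d x := detCols_update_neg d x i1
    refine abs_le.2 ⟨?_, ?_⟩
    · have := hcon x0; have := hcon x1; linarith [hsum2, hdet0 ▸ hcon x0]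
    · linarith [hcon x, hcon xb, hdetb ▸ hcon xb]
  · apply Finset.sum_congr rfl
    intro i _
    have hneg : AEMeasurable (fun y : EuclideanSpace ℝ (Fin d) => -y) (μ i) :=
      measurable_neg.aemeasurable
    by_cases h0 : i = i0
    · subst h0
      have hmap : Integrable (φ i0) ((μ i0).map (fun y => -y)) := by
        rw [hsym₀]; exact hφ i0
      have hint : Integrable (fun y => φ i0 (-y)) (μ i0) :=
        (integrable_map_measure hmap.aestronglyMeasurable hneg).1 hmap
      have heq : ∫ y, φ i0 (-y) ∂(μ i0) = ∫ y, φ i0 y ∂(μ i0) := by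
        conv_rhs => rw [← hsym₀]
        rw [integral_map hneg hmap.aestronglyMeasurable]
      calc ∫ y, ψ i0 y ∂(μ i0) = ∫ y, (φ i0 y + φ i0 (-y)) / 2 ∂(μ i0) := by
            simp only [hψ₀]
        _ = ((∫ y, φ i0 y ∂(μ i0)) + ∫ y, φ i0 (-y) ∂(μ i0)) / 2 := by
            rw [integral_div, integral_add (hφ i0) hint]
        _ = ∫ y, φ i0 y ∂(μ i0) := by rw [heq]; ring
    · by_cases h1 : i = i1
      · subst h1
        have hmap : Integrable (φ i1) ((μ i1).map (fun y => -y)) := by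
          rw [hsym₁]; exact hφ i1
        have hint : Integrable (fun y => φ i1 (-y)) (μ i1) :=
          (integrable_map_measure hmap.aestronglyMeasurable hneg).1 hmap
        have heq : ∫ y, φ i1 (-y) ∂(μ i1) = ∫ y, φ i1 y ∂(μ i1) := by
          conv_rhs => rw [← hsym₁]
          rw [integral_map hneg hmap.aestronglyMeasurable]
        calc ∫ y, ψ i1 y ∂(μ i1) = ∫ y, (φ i1 y + φ i1 (-y)) / 2 ∂(μ i1) := by
              simp only [hψ₁]
          _ = ((∫ y, φ i1 y ∂(μ i1)) + ∫ y, φ i1 (-y) ∂(μ i1)) / 2 := by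
              rw [integral_div, integral_add (hφ i1) hint]
          _ = ∫ y, φ i1 y ∂(μ i1) := by rw [heq]; ring
      · rw [hψ i h0 h1]
end
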